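/- arXiv:2008.08192 — 2 statements merged into one kernel-verified Lean document; each statement's English description precedes it below -/
import Mathlib

section
/- The kernel of the natural epimorphism χ(G) → G × G (sending g ↦ (g,1) and g^φ ↦ (1,g)) is the subgroup D(G) = [G, G^φ] generated by all commutators [g, h^φ] with g, h ∈ G. -/
/-!
`D(G)` is normalized by both `G` and `G^φ`, which generate `χ(G)`, so it is normal. Modulo `D(G)`
the images of `G` and `G^φ` commute, so `(a, b) ↦ a · b^φ` is a homomorphism `G × G → χ(G)/D(G)`;
composed with `f` it is the quotient map, because both agree on the generators. Hence
`ker f ≤ D(G)`, and the reverse inclusion holds since `f [g, h^φ] = [(g, 1), (1, h)] = 1`.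
-/

open scoped commutatorElement in
def chiRels (G : Type*) [Group G] : Subgroup (Monoid.Coprod G G) :=
  Subgroup.normalClosure {x | ∃ g : G, x = ⁅(Monoid.Coprod.inl g : Monoid.Coprod G G), Monoid.Coprod.inr g⁆}

instance (G : Type*) [Group G] : (chiRels G).Normal :=
  Subgroup.normalClosure_normal

def chi (G : Type*) [Group G] := Monoid.Coprod G G ⧸ chiRels G

instance (G : Type*) [Group G] : Group (chi G) :=
  QuotientGroup.Quotient.group _

/-- The canonical map `G →* χ(G)`. -/
def chiL (G : Type*) [Group G] : G →* chi G :=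
  (QuotientGroup.mk' (chiRels G)).comp Monoid.Coprod.inl

/-- The canonical map `G^φ →* χ(G)`, `g ↦ g^φ`. -/
def chiR (G : Type*) [Group G] : G →* chi G :=
  (QuotientGroup.mk' (chiRels G)).comp Monoid.Coprod.inr

/-- `D(G) = [G, G^φ] ≤ χ(G)`. -/
def chiD (G : Type*) [Group G] : Subgroup (chi G) :=
  ⁅(chiL G).range, (chiR G).range⁆

open scoped commutatorElement

theorem Subgroup.commutator_normal_of_sup_eq_top {H : Type*} [Group H] {A B : Subgroup H}
    (hAB : A ⊔ B = ⊤) : ⁅A, B⁆.Normal :=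
  Subgroup.normalizer_eq_top_iff.mp <| top_le_iff.mp <| hAB ▸
    sup_le (Subgroup.normalizer_commutator_ge_left A B) (Subgroup.normalizer_commutator_ge_right A B)

theorem MonoidHom.ker_eq_commutator_range_of_sup_range_eq_top {G₁ G₂ H : Type*}
    [Group G₁] [Group G₂] [Group H] {i : G₁ →* H} {j : G₂ →* H}
    (hij : i.range ⊔ j.range = ⊤) (f : H →* G₁ × G₂)
    (hfi : ∀ g, f (i g) = (g, 1)) (hfj : ∀ g, f (j g) = (1, g)) :
    f.ker = ⁅i.range, j.range⁆ := by
  refine le_antisymm ?_ ?_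
  · have := Subgroup.commutator_normal_of_sup_eq_top hij
    set q := QuotientGroup.mk' ⁅i.range, j.range⁆
    have hcomm : ∀ a b, Commute (q (i a)) (q (j b)) := fun a b => by
      rw [← commutatorElement_eq_one_iff_commute, ← map_commutatorElement,
        QuotientGroup.mk'_apply, QuotientGroup.eq_one_iff]
      exact Subgroup.commutator_mem_commutator ⟨a, rfl⟩ ⟨b, rfl⟩
    set s := MonoidHom.noncommCoprod (q.comp i) (q.comp j) hcomm
    have hsf : ∀ x, s (f x) = q x := by
      have : ⊤ ≤ (s.comp f).eqLocus q := hij ▸ sup_le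
        (by rintro _ ⟨g, rfl⟩; show s (f (i g)) = q (i g); simp [s, hfi])
        (by rintro _ ⟨g, rfl⟩; show s (f (j g)) = q (j g); simp [s, hfj])
      exact fun x => this (Subgroup.mem_top x)
    intro x hx
    rw [← QuotientGroup.eq_one_iff, ← QuotientGroup.mk'_apply, ← hsf, hx, map_one]
  · rw [Subgroup.commutator_le]
    rintro _ ⟨a, rfl⟩ _ ⟨b, rfl⟩
    simp [hfi, hfj, commutatorElement_def]

theorem chi_range_chiL_sup_range_chiR (G : Type*) [Group G] :
    (chiL G).range ⊔ (chiR G).range = ⊤ := by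
  have hL : (chiL G).range = Monoid.Coprod.inl.range.map (QuotientGroup.mk' (chiRels G)) :=
    (MonoidHom.map_range _ _).symm
  have hR : (chiR G).range = Monoid.Coprod.inr.range.map (QuotientGroup.mk' (chiRels G)) :=
    (MonoidHom.map_range _ _).symm
  rw [hL, hR]
  refine (Subgroup.map_sup _ _ _).symm.trans ?_
  rw [Monoid.Coprod.range_inl_sup_range_inr]
  exact Subgroup.map_top_of_surjective _ (QuotientGroup.mk'_surjective _)

/-- The kernel of the natural epimorphism χ(G) → G × G
(g ↦ (g,1), g^φ ↦ (1,g)) is D(G) = [G, G^φ]. -/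
theorem stmt_4 {G : Type*} [Group G] (f : chi G →* G × G)
    (hfL : ∀ g : G, f (chiL G g) = (g, 1))
    (hfR : ∀ g : G, f (chiR G g) = (1, g)) :
    f.ker = chiD G :=
  MonoidHom.ker_eq_commutator_range_of_sup_range_eq_top (chi_range_chiL_sup_range_chiR G) f hfL hfR
end

section
/- The kernel of the natural epimorphism χ(G) → G (sending both g and g^φ to g) is the subgroup L(G) generated by all elements g⁻¹g^φ with g ∈ G, and L(G) and D(G) = [G,G^φ] commute elementwise. -/
/-- L(G) = ⟨g⁻¹ g^φ : g ∈ G⟩ ≤ χ(G). -/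
def chiLsub (G : Type*) [Group G] : Subgroup (chi G) :=
  Subgroup.closure {x | ∃ g : G, x = (chiL G g)⁻¹ * chiR G g}

/-!
Writing `x_k = k⁻¹ k^φ`, conjugation by `h` sends `x_g` to `x_{gh⁻¹} x_{h⁻¹}⁻¹`, so `L(G)` is
normalised by both copies of `G` and is normal. Modulo `L(G)` the two copies agree, so the
quotient map factors through `f` and `ker f ≤ L(G)`; this needs no relation of `χ(G)`.

The relations of `χ(G)` give `[a, b^φ] = [a^φ, b]`. Expanding `[a, (gb)^φ]` once directly and once
as `[a^φ, gb]` shows that conjugation by `g` and by `g^φ` agree on `[a, b^φ]`, i.e. `g⁻¹ g^φ`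
centralises the generators of `D(G)`.
-/

open scoped commutatorElement

section InvMulClosure

variable {G H : Type*} [Group G] [Group H] (i j : G →* H)

def invMulClosure : Subgroup H :=
  Subgroup.closure {x | ∃ g, x = (i g)⁻¹ * j g}

lemma inv_mul_mem_invMulClosure (g : G) : (i g)⁻¹ * j g ∈ invMulClosure i j :=
  Subgroup.subset_closure ⟨g, rfl⟩

lemma conj_mem_invMulClosure (h : G) {x : H} (hx : x ∈ invMulClosure i j) :
    i h * x * (i h)⁻¹ ∈ invMulClosure i j := by
  refine (Subgroup.closure_le ((invMulClosure i j).comap (MulAut.conj (i h)).toMonoidHom)).2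
    ?_ hx
  rintro _ ⟨g, rfl⟩
  have e : i h * ((i g)⁻¹ * j g) * (i h)⁻¹
      = (i (g * h⁻¹))⁻¹ * j (g * h⁻¹) * ((i h⁻¹)⁻¹ * j h⁻¹)⁻¹ := by
    simp only [map_mul, map_inv]
    group
  change i h * ((i g)⁻¹ * j g) * (i h)⁻¹ ∈ invMulClosure i j
  rw [e]
  exact mul_mem (inv_mul_mem_invMulClosure i j _) (inv_mem (inv_mul_mem_invMulClosure i j _))

lemma invMulClosure_normal (hij : i.range ⊔ j.range = ⊤) : (invMulClosure i j).Normal := by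
  have hi : i.range ≤ Subgroup.normalizer (invMulClosure i j : Set H) := by
    rintro _ ⟨h, rfl⟩
    refine Subgroup.mem_normalizer_iff.2 fun x ↦ ⟨conj_mem_invMulClosure i j h, fun hx ↦ ?_⟩
    simpa [mul_assoc] using conj_mem_invMulClosure i j h⁻¹ hx
  have hj : j.range ≤ Subgroup.normalizer (invMulClosure i j : Set H) := by
    rintro _ ⟨h, rfl⟩
    simpa using mul_mem (hi (MonoidHom.mem_range.2 ⟨h, rfl⟩))
      (Subgroup.le_normalizer (inv_mul_mem_invMulClosure i j h))
  rw [← Subgroup.normalizer_eq_top_iff, eq_top_iff, ← hij]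
  exact sup_le hi hj

theorem ker_eq_invMulClosure (hij : i.range ⊔ j.range = ⊤) (f : H →* G)
    (hfi : ∀ g, f (i g) = g) (hfj : ∀ g, f (j g) = g) :
    f.ker = invMulClosure i j := by
  have := invMulClosure_normal i j hij
  refine le_antisymm (fun x hx ↦ ?_) ((Subgroup.closure_le _).2 ?_)
  · set π := QuotientGroup.mk' (invMulClosure i j)
    have hπij : π.comp i = π.comp j :=
      MonoidHom.ext fun g ↦ QuotientGroup.eq.2 (inv_mul_mem_invMulClosure i j g)
    have hπ : ∀ y, π (i (f y)) = π y := by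
      suffices ⊤ ≤ ((π.comp i).comp f).eqLocus π from fun y ↦ this trivial
      rw [← hij]
      refine sup_le ?_ ?_ <;> rintro _ ⟨g, rfl⟩
      · exact congrArg π (congrArg i (hfi g))
      · exact (congrArg π (congrArg i (hfj g))).trans (DFunLike.congr_fun hπij g)
    rw [← QuotientGroup.eq_one_iff]
    change π x = 1
    rw [← hπ, (MonoidHom.mem_ker).1 hx, map_one, map_one]
  · rintro _ ⟨g, rfl⟩
    simp [hfi, hfj]

end InvMulClosure

theorem commutatorElement_inv_eq_of_commute {H : Type*} [Group H] {a b a' b' : H}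
    (ha : Commute a a') (hb : Commute b b') (hab : Commute (a * b) (a' * b')) :
    ⁅a⁻¹, b'⁆ = ⁅a'⁻¹, b⁆ :=
  calc ⁅a⁻¹, b'⁆ = a'⁻¹ * (a' * a⁻¹) * b' * a * (b'⁻¹ * b) * b⁻¹ := by
        rw [commutatorElement_def]; group
    _ = a'⁻¹ * (a⁻¹ * a') * b' * a * (b * b'⁻¹) * b⁻¹ := by
        rw [← ha.inv_left.eq, hb.symm.inv_left.eq]
    _ = a'⁻¹ * a⁻¹ * (a' * b' * (a * b)) * b'⁻¹ * b⁻¹ := by group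
    _ = a'⁻¹ * a⁻¹ * (a * b * (a' * b')) * b'⁻¹ * b⁻¹ := by rw [hab.eq]
    _ = ⁅a'⁻¹, b⁆ := by rw [commutatorElement_def]; group

section Chi

variable {G : Type*} [Group G]

lemma chiL_range_sup_chiR_range : (chiL G).range ⊔ (chiR G).range = ⊤ := by
  have := Monoid.Coprod.range_eq (QuotientGroup.mk' (chiRels G) : Monoid.Coprod G G →* chi G)
  exact this.symm.trans (QuotientGroup.range_mk' _)

lemma commute_chiL_chiR (g : G) : Commute (chiL G g) (chiR G g) := by
  have h : (QuotientGroup.mk' (chiRels G) : Monoid.Coprod G G →* chi G)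
      ⁅Monoid.Coprod.inl g, Monoid.Coprod.inr g⁆ = 1 :=
    (QuotientGroup.eq_one_iff _).2 (Subgroup.subset_normalClosure ⟨g, rfl⟩)
  rw [map_commutatorElement] at h
  exact commutatorElement_eq_one_iff_commute.1 h

lemma commutatorElement_chiL_chiR (a b : G) :
    ⁅chiL G a, chiR G b⁆ = ⁅chiR G a, chiL G b⁆ := by
  have hab : Commute (chiL G a⁻¹ * chiL G b) (chiR G a⁻¹ * chiR G b) := by
    simpa only [map_mul] using commute_chiL_chiR (a⁻¹ * b)
  simpa only [map_inv, inv_inv] using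
    commutatorElement_inv_eq_of_commute (commute_chiL_chiR a⁻¹) (commute_chiL_chiR b) hab

lemma chiL_conj_commutatorElement_eq_chiR_conj (g a b : G) :
    chiL G g * ⁅chiL G a, chiR G b⁆ * (chiL G g)⁻¹
      = chiR G g * ⁅chiL G a, chiR G b⁆ * (chiR G g)⁻¹ := by
  refine mul_left_cancel (a := ⁅chiL G a, chiR G g⁆) ?_
  calc ⁅chiL G a, chiR G g⁆ * (chiL G g * ⁅chiL G a, chiR G b⁆ * (chiL G g)⁻¹)
      = ⁅chiR G a, chiL G g⁆ * chiL G g * ⁅chiR G a, chiL G b⁆ * (chiL G g)⁻¹ := by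
        rw [commutatorElement_chiL_chiR, commutatorElement_chiL_chiR]
        simp only [mul_assoc]
    _ = ⁅chiL G a, chiR G (g * b)⁆ := by
        rw [commutatorElement_chiL_chiR, map_mul, commutatorElement_mul_right_eq_mul_conj]
    _ = ⁅chiL G a, chiR G g⁆ * (chiR G g * ⁅chiL G a, chiR G b⁆ * (chiR G g)⁻¹) := by
        rw [map_mul, commutatorElement_mul_right_eq_mul_conj]
        simp only [mul_assoc]

lemma commute_inv_mul_commutatorElement_chiL_chiR (g a b : G) :
    Commute ((chiL G g)⁻¹ * chiR G g) ⁅chiL G a, chiR G b⁆ :=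
  calc (chiL G g)⁻¹ * chiR G g * ⁅chiL G a, chiR G b⁆
      = (chiL G g)⁻¹ * (chiR G g * ⁅chiL G a, chiR G b⁆ * (chiR G g)⁻¹) * chiR G g := by
        group
    _ = (chiL G g)⁻¹ * (chiL G g * ⁅chiL G a, chiR G b⁆ * (chiL G g)⁻¹) * chiR G g := by
        rw [chiL_conj_commutatorElement_eq_chiR_conj]
    _ = ⁅chiL G a, chiR G b⁆ * ((chiL G g)⁻¹ * chiR G g) := by
        group

lemma chiLsub_le_centralizer_chiD : chiLsub G ≤ Subgroup.centralizer (chiD G) := by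
  rw [Subgroup.le_centralizer_iff, chiD, Subgroup.commutator_le]
  rintro _ ⟨a, rfl⟩ _ ⟨b, rfl⟩
  rw [chiLsub, Subgroup.centralizer_closure]
  rintro _ ⟨g, rfl⟩
  exact commute_inv_mul_commutatorElement_chiL_chiR g a b

end Chi

/-- The kernel of the natural epimorphism χ(G) → G (g ↦ g, g^φ ↦ g) is
L(G) = ⟨g⁻¹ g^φ : g ∈ G⟩, and L(G) and D(G) commute elementwise. -/
theorem stmt_5 {G : Type*} [Group G] (f : chi G →* G)
    (hfL : ∀ g : G, f (chiL G g) = g)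
    (hfR : ∀ g : G, f (chiR G g) = g) :
    f.ker = chiLsub G ∧
      ∀ a ∈ chiLsub G, ∀ b ∈ chiD G, Commute a b :=
  ⟨ker_eq_invMulClosure _ _ chiL_range_sup_chiR_range f hfL hfR,
    fun _ ha b hb ↦ (chiLsub_le_centralizer_chiD ha b hb).symm⟩
end
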